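/- Let n, m be positive integers and let f : B^n → B^m be a holomorphic map with f(0) = 0 such that ⟨f(z), f(w)⟩ = ⟨z, w⟩ for all z, w ∈ B^n. Then f is the restriction to B^n of a ℂ-linear isometry L : ℂ^n → ℂ^m, i.e., there is a linear map L with ‖L(v)‖ = ‖v‖ for all v ∈ ℂ^n and f(z) = L(z) for all z ∈ B^n. -/

import Mathlib

/-!
If `f` preserves inner products on a neighbourhood `s` of `0`, then for every linear relation
`x = ∑ cᵢ vᵢ` among points of `s`, the defect `d = f x - ∑ cᵢ f vᵢ` satisfies
`⟪d, f w⟫ = ⟪x - ∑ cᵢ vᵢ, w⟫ = 0` for all `w ∈ s`; since `d` is itself a combination of such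
vectors `f w`, this gives `⟪d, d⟫ = 0`. Expanding each point of `s` in a small multiple of an
orthonormal basis thus shows that `f` agrees on `s` with a linear map. That map preserves norms
near `0`, hence everywhere by homogeneity.
-/

/-- The standard Hermitian inner product `⟨z,w⟩ = ∑ zᵢ · conj(wᵢ)` on `ℂⁿ`. -/
noncomputable def herm {n : ℕ} (z w : EuclideanSpace ℂ (Fin n)) : ℂ :=
  ∑ i, z i * (starRingEnd ℂ) (w i)

open Filter Topology Set
open scoped InnerProductSpace

lemma herm_eq_inner {n : ℕ} (z w : EuclideanSpace ℂ (Fin n)) : herm z w = ⟪w, z⟫_ℂ := by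
  rw [herm, PiLp.inner_apply]
  exact Finset.sum_congr rfl fun i _ => by simp

theorem exists_ne_zero_forall_smul_mem {𝕜 E ι : Type*} [NontriviallyNormedField 𝕜]
    [AddCommMonoid E] [TopologicalSpace E] [Module 𝕜 E] [ContinuousSMul 𝕜 E] [Finite ι]
    {s : Set E} (hs : s ∈ 𝓝 0) (v : ι → E) : ∃ c : 𝕜, c ≠ 0 ∧ ∀ i, c • v i ∈ s := by
  have hsmall : ∀ᶠ c in 𝓝[≠] (0 : 𝕜), ∀ i, c • v i ∈ s := by
    refine eventually_all.2 fun i => nhdsWithin_le_nhds ?_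
    have hcont : Tendsto (fun c : 𝕜 => c • v i) (𝓝 0) (𝓝 0) := by
      simpa using (tendsto_id (x := 𝓝 (0 : 𝕜))).smul_const (v i)
    exact hcont.eventually_mem hs
  obtain ⟨c, hc, hcne⟩ := (hsmall.and self_mem_nhdsWithin).exists
  exact ⟨c, hcne, hc⟩

theorem LinearMap.norm_map_of_eventually_nhds_zero {𝕜 E F : Type*} [NontriviallyNormedField 𝕜]
    [SeminormedAddCommGroup E] [NormedSpace 𝕜 E] [SeminormedAddCommGroup F] [NormedSpace 𝕜 F]
    (L : E →ₗ[𝕜] F) (h : ∀ᶠ x in 𝓝 0, ‖L x‖ = ‖x‖) (v : E) : ‖L v‖ = ‖v‖ := by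
  obtain ⟨c, hc, hcv⟩ := exists_ne_zero_forall_smul_mem (𝕜 := 𝕜) h fun _ : Unit => v
  have hscaled : ‖L (c • v)‖ = ‖c • v‖ := hcv ()
  rw [map_smul, norm_smul, norm_smul] at hscaled
  exact mul_left_cancel₀ (norm_ne_zero_iff.2 hc) hscaled

section InnerPreserving

variable {𝕜 E F : Type*} [RCLike 𝕜] [NormedAddCommGroup E] [InnerProductSpace 𝕜 E]
  [NormedAddCommGroup F] [InnerProductSpace 𝕜 F] {f : E → F} {s : Set E}

theorem map_eq_sum_smul_of_inner_map_map (hf : ∀ x ∈ s, ∀ y ∈ s, ⟪f x, f y⟫_𝕜 = ⟪x, y⟫_𝕜)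
    {ι : Type*} [Fintype ι] (c : ι → 𝕜) {v : ι → E} (hv : ∀ i, v i ∈ s) {x : E} (hx : x ∈ s)
    (hxv : x = ∑ i, c i • v i) : f x = ∑ i, c i • f (v i) := by
  set d := f x - ∑ i, c i • f (v i)
  have hd_perp : ∀ w ∈ s, ⟪d, f w⟫_𝕜 = 0 := fun w hw => by
    have hlin : ⟪d, f w⟫_𝕜 = ⟪x - ∑ i, c i • v i, w⟫_𝕜 := by
      simp only [d, inner_sub_left, sum_inner, inner_smul_left, hf _ hx _ hw, hf _ (hv _) _ hw]
    rw [hlin, ← hxv, sub_self, inner_zero_left]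
  have hdd : ⟪d, d⟫_𝕜 = 0 := by
    simp only [d, inner_sub_right, inner_sum, inner_smul_right, hd_perp _ hx, hd_perp _ (hv _),
      mul_zero, Finset.sum_const_zero, sub_zero]
  exact sub_eq_zero.1 (inner_self_eq_zero.1 hdd)

theorem norm_map_of_inner_map_map (hf : ∀ x ∈ s, ∀ y ∈ s, ⟪f x, f y⟫_𝕜 = ⟪x, y⟫_𝕜) {x : E}
    (hx : x ∈ s) : ‖f x‖ = ‖x‖ := by
  rw [norm_eq_sqrt_re_inner (𝕜 := 𝕜), norm_eq_sqrt_re_inner (𝕜 := 𝕜), hf x hx x hx]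

theorem exists_linearIsometry_eqOn_of_inner_map_map [FiniteDimensional 𝕜 E] (hs : s ∈ 𝓝 0)
    (hf : ∀ x ∈ s, ∀ y ∈ s, ⟪f x, f y⟫_𝕜 = ⟪x, y⟫_𝕜) : ∃ L : E →ₗᵢ[𝕜] F, EqOn f L s := by
  let b := stdOrthonormalBasis 𝕜 E
  obtain ⟨c, hc, hcb⟩ := exists_ne_zero_forall_smul_mem (𝕜 := 𝕜) hs b
  let L : E →ₗ[𝕜] F := b.toBasis.constr 𝕜 fun i => c⁻¹ • f (c • b i)
  have hfL : EqOn f L s := fun x hx => by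
    have hx_exp : x = ∑ i, (c⁻¹ * b.repr x i) • c • b i := by
      conv_lhs => rw [← b.sum_repr x]
      refine Finset.sum_congr rfl fun i _ => ?_
      rw [smul_smul, mul_right_comm, inv_mul_cancel₀ hc, one_mul]
    rw [map_eq_sum_smul_of_inner_map_map hf _ hcb hx hx_exp, Module.Basis.constr_apply_fintype]
    simp only [Module.Basis.equivFun_apply, OrthonormalBasis.coe_toBasis_repr_apply, smul_smul,
      mul_comm]
  have hL_near : ∀ᶠ x in 𝓝 0, ‖L x‖ = ‖x‖ :=
    Filter.mem_of_superset hs fun x hx =>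
      show ‖L x‖ = ‖x‖ by rw [← hfL hx, norm_map_of_inner_map_map hf hx]
  exact ⟨⟨L, L.norm_map_of_eventually_nhds_zero hL_near⟩, hfL⟩

end InnerPreserving

theorem inner_preserving_holomorphic_map_is_linear_isometry_general
    (n m : ℕ)
    (f : EuclideanSpace ℂ (Fin n) → EuclideanSpace ℂ (Fin m))
    (heq : ∀ z ∈ Metric.ball (0 : EuclideanSpace ℂ (Fin n)) 1,
           ∀ w ∈ Metric.ball (0 : EuclideanSpace ℂ (Fin n)) 1,
      herm (f z) (f w) = herm z w) :
    ∃ L : EuclideanSpace ℂ (Fin n) →ₗ[ℂ] EuclideanSpace ℂ (Fin m),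
      (∀ v, ‖L v‖ = ‖v‖) ∧
      ∀ z ∈ Metric.ball (0 : EuclideanSpace ℂ (Fin n)) 1, f z = L z := by
  have hinner : ∀ z ∈ Metric.ball (0 : EuclideanSpace ℂ (Fin n)) 1,
      ∀ w ∈ Metric.ball (0 : EuclideanSpace ℂ (Fin n)) 1, ⟪f z, f w⟫_ℂ = ⟪z, w⟫_ℂ :=
    fun z hz w hw => by simpa only [herm_eq_inner] using heq w hw z hz
  obtain ⟨L, hL⟩ :=
    exists_linearIsometry_eqOn_of_inner_map_map (Metric.ball_mem_nhds 0 one_pos) hinner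
  exact ⟨L.toLinearMap, L.norm_map, hL⟩

theorem inner_preserving_holomorphic_map_is_linear_isometry
    (n m : ℕ) (hn : 0 < n) (hm : 0 < m)
    (f : EuclideanSpace ℂ (Fin n) → EuclideanSpace ℂ (Fin m))
    (hf_maps : ∀ z ∈ Metric.ball (0 : EuclideanSpace ℂ (Fin n)) 1,
      f z ∈ Metric.ball (0 : EuclideanSpace ℂ (Fin m)) 1)
    (hf_holo : DifferentiableOn ℂ f (Metric.ball 0 1))
    (hf0 : f 0 = 0)
    (heq : ∀ z ∈ Metric.ball (0 : EuclideanSpace ℂ (Fin n)) 1,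
           ∀ w ∈ Metric.ball (0 : EuclideanSpace ℂ (Fin n)) 1,
      herm (f z) (f w) = herm z w) :
    ∃ L : EuclideanSpace ℂ (Fin n) →ₗ[ℂ] EuclideanSpace ℂ (Fin m),
      (∀ v, ‖L v‖ = ‖v‖) ∧
      ∀ z ∈ Metric.ball (0 : EuclideanSpace ℂ (Fin n)) 1, f z = L z :=
  inner_preserving_holomorphic_map_is_linear_isometry_general n m f heq
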